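/- arXiv:math/0605761 — 2 statements merged into one kernel-verified Lean document; each statement's English description precedes it below -/
import Mathlib

section
/- Let k ≥ 3 be an integer and let z satisfy 0 < z ≤ r_k = arsinh(cot(π/k)). Then the Lebesgue double integral of (x − y)^{−2} over the plane region Ω = {(x,y) ∈ ℝ² : 0 < x < tan(π/k), −1/x ≤ y < 0, and D(x,y) ≤ z} equals (π/k)·sinh z. (By the symmetry (x,y) ↦ (−x,−y), the integral over the mirror region with −tan(π/k) < x < 0 and 0 < y ≤ −1/x has the same value.) -/
open Real MeasureTheory

/-- The geodesic of the upper half-plane with endpoints `x` and `y` at infinity: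
the Euclidean semicircle with center `(x+y)/2` and radius `|x-y|/2`. -/
def geodesicUHP (x y : ℝ) : Set UpperHalfPlane :=
  {w : UpperHalfPlane | ‖(w : ℂ) - (((x + y) / 2 : ℝ) : ℂ)‖ = |x - y| / 2}

/-- The hyperbolic distance from the point `i` of the upper half-plane to the geodesic
with endpoints `x`, `y` at infinity. -/
noncomputable def D (x y : ℝ) : ℝ :=
  Metric.infDist UpperHalfPlane.I (geodesicUHP x y)

lemma coshDistI (w : UpperHalfPlane) :
    Real.cosh (dist UpperHalfPlane.I w) =
      ((w : ℂ).re ^ 2 + (w : ℂ).im ^ 2 + 1) / (2 * (w : ℂ).im) := by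
  have hv : 0 < (w : ℂ).im := w.2
  have hI : (UpperHalfPlane.I : ℂ) = Complex.I := rfl
  rw [UpperHalfPlane.cosh_dist, Complex.dist_eq, Complex.sq_norm, UpperHalfPlane.I_im, hI]
  simp only [Complex.normSq_apply, Complex.sub_re, Complex.sub_im, Complex.I_re, Complex.I_im,
    UpperHalfPlane.coe_im]
  field_simp
  ring

lemma mem_geod_iff {x y : ℝ} (hxy : y < x) (w : UpperHalfPlane) :
    w ∈ geodesicUHP x y ↔
      ((w : ℂ).re - (x + y) / 2) ^ 2 + ((w : ℂ).im) ^ 2 = ((x - y) / 2) ^ 2 := by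
  have habs : |x - y| = x - y := abs_of_pos (by linarith)
  have hns : Complex.normSq ((w : ℂ) - (((x + y) / 2 : ℝ) : ℂ)) =
      ((w : ℂ).re - (x + y) / 2) ^ 2 + ((w : ℂ).im) ^ 2 := by
    simp [Complex.normSq_apply, Complex.sub_re, Complex.sub_im]
    ring
  constructor
  · intro h
    simp only [geodesicUHP, Set.mem_setOf_eq, habs] at h
    rw [← hns, ← Complex.sq_norm, h]
  · intro h
    simp only [geodesicUHP, Set.mem_setOf_eq, habs]
    have h2 : (‖(w : ℂ) - (((x + y) / 2 : ℝ) : ℂ)‖) ^ 2 = ((x - y) / 2) ^ 2 := by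
      rw [Complex.sq_norm, hns, h]
    exact (sq_eq_sq₀ (norm_nonneg _) (by linarith)).mp h2

lemma le_of_sq_le_sq' {a b : ℝ} (h : a^2 ≤ b^2) (ha : 0 ≤ a) (hb : 0 ≤ b) : a ≤ b := by
  nlinarith

lemma D_eq {x y : ℝ} (hx : 0 < x) (hy : y < 0) (h1 : 0 ≤ 1 + x * y) :
    D x y = Real.arsinh ((1 + x * y) / (x - y)) := by
  have hxy : (0:ℝ) < x - y := by linarith
  set S : ℝ := Real.sqrt ((1 + x ^ 2) * (1 + y ^ 2)) with hSdef
  have hS2 : S ^ 2 = (1 + x ^ 2) * (1 + y ^ 2) := Real.sq_sqrt (by positivity)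
  have hS : 0 < S := Real.sqrt_pos.mpr (by positivity)
  set q : ℝ := (1 + x * y) / (x - y) with hqdef
  have hq : 0 ≤ q := div_nonneg h1 hxy.le
  -- cosh (arsinh q) = S / (x - y)
  have hcoshq : Real.cosh (Real.arsinh q) = S / (x - y) := by
    rw [Real.cosh_arsinh]
    have h1q : 1 + q ^ 2 = (S / (x - y)) ^ 2 := by
      rw [hqdef, div_pow, div_pow, hS2]
      field_simp
      ring
    rw [h1q, Real.sqrt_sq (by positivity)]
  set E : ℝ := x ^ 2 + y ^ 2 + 2 with hEdef
  have hE : 0 < E := by positivity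
  set u₀ : ℝ := (x + y) * (1 + x * y) / E with hu0
  set v₀ : ℝ := (x - y) * S / E with hv0
  have hv₀ : 0 < v₀ := by positivity
  set w₀ : UpperHalfPlane := ⟨⟨u₀, v₀⟩, hv₀⟩ with hw0
  have hwre : (w₀ : ℂ).re = u₀ := rfl
  have hwim : (w₀ : ℂ).im = v₀ := rfl
  have hv0sq : v₀ ^ 2 = (x - y) ^ 2 * ((1 + x ^ 2) * (1 + y ^ 2)) / E ^ 2 := by
    rw [hv0, div_pow, mul_pow, hS2]
  have hmem : w₀ ∈ geodesicUHP x y := by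
    rw [mem_geod_iff (by linarith), hwre, hwim]
    rw [hv0sq, hu0]
    field_simp
    ring
  -- cosh dist I w₀ = S / (x-y)
  have hnum : u₀ ^ 2 + v₀ ^ 2 + 1 = 2 * S ^ 2 / E := by
    rw [hv0sq, hS2, hu0]
    field_simp
    ring
  have hcoshw : Real.cosh (dist UpperHalfPlane.I w₀) = S / (x - y) := by
    rw [coshDistI, hwre, hwim, hnum, hv0]
    field_simp
  have hdistw : dist UpperHalfPlane.I w₀ = Real.arsinh q := by
    have h0 : dist UpperHalfPlane.I w₀ ∈ Set.Ici (0:ℝ) := Set.mem_Ici.mpr dist_nonneg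
    have h0' : Real.arsinh q ∈ Set.Ici (0:ℝ) := Set.mem_Ici.mpr (Real.arsinh_nonneg_iff.mpr hq)
    exact Real.cosh_strictMonoOn.injOn h0 h0' (by rw [hcoshw, hcoshq])
  have hlb : ∀ w ∈ geodesicUHP x y, Real.arsinh q ≤ dist UpperHalfPlane.I w := by
    intro w hw
    rw [mem_geod_iff (by linarith)] at hw
    set u : ℝ := (w:ℂ).re with hu
    set v : ℝ := (w:ℂ).im with hv
    have hvpos : 0 < v := w.2
    have hv2 : v^2 = (x-u)*(u-y) := by linear_combination hw
    have hL : 0 < (x-y)*(u^2+v^2+1) := by positivity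
    have hR : 0 ≤ 2*v*S := by positivity
    have h4 : (2*v*S)^2 = 4*((x-u)*(u-y))*((1+x^2)*(1+y^2)) := by
      linear_combination (4*S^2)*hv2 + (4*(x-u)*(u-y))*hS2
    have h5 : ((x-y)*(u^2+v^2+1))^2 = ((x-y)*(u^2+(x-u)*(u-y)+1))^2 := by rw [hv2]
    have key : ((x-y)*(u^2+(x-u)*(u-y)+1))^2 - 4*((x-u)*(u-y))*((1+x^2)*(1+y^2))
        = ((x^2+y^2+2)*u - (x+y)*(1+x*y))^2 := by ring
    have hsq : (2*v*S)^2 ≤ ((x-y)*(u^2+v^2+1))^2 := by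
      rw [h4, h5]; linarith [key, sq_nonneg ((x^2+y^2+2)*u - (x+y)*(1+x*y))]
    have hle : 2*v*S ≤ (x-y)*(u^2+v^2+1) := le_of_sq_le_sq' hsq hR hL.le
    have hc1 : Real.cosh (Real.arsinh q) ≤ Real.cosh (dist UpperHalfPlane.I w) := by
      rw [hcoshq, coshDistI, div_le_div_iff₀ hxy (by positivity)]
      linarith [hle]
    have habs := Real.cosh_le_cosh.mp hc1
    calc Real.arsinh q ≤ |Real.arsinh q| := le_abs_self _
      _ ≤ |dist UpperHalfPlane.I w| := habs
      _ = dist UpperHalfPlane.I w := abs_of_nonneg dist_nonneg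
  rw [D]
  apply le_antisymm
  · exact (Metric.infDist_le_dist_of_mem hmem).trans_eq hdistw
  · haveI : Nonempty ↥(geodesicUHP x y) := ⟨⟨w₀, hmem⟩⟩
    rw [Metric.infDist_eq_iInf]
    exact le_ciInf (fun p => hlb p.1 p.2)

lemma inner_int {x s l u : ℝ} (hl : l = -1/x) (hu : u = (s*x-1)/(x+s))
    (hx : 0 < x) (hs : 0 < s) (hsx : s*x < 1) :
    ∫ y in Set.Icc l u, 1/(x - y)^2 = s/(1+x^2) := by
  have hxs : 0 < x + s := by linarith
  have hu0 : u < 0 := by rw [hu]; apply div_neg_of_neg_of_pos (by linarith) hxs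
  have hlu : l ≤ u := by
    rw [hl, hu, div_le_div_iff₀ (by linarith) hxs]
    nlinarith [sq_nonneg x]
  have hA : x - u = (x^2+1)/(x+s) := by rw [hu]; field_simp; ring
  have hB : x - l = (x^2+1)/x := by rw [hl]; field_simp; ring
  have hApos : 0 < x - u := by rw [hA]; positivity
  have hBpos : 0 < x - l := by rw [hB]; positivity
  rw [MeasureTheory.integral_Icc_eq_integral_Ioc, ← intervalIntegral.integral_of_le hlu,
    intervalIntegral.integral_comp_sub_left (fun t => 1/t^2) x]
  have hz : ∀ t : ℝ, (1:ℝ)/t^2 = t ^ (-2 : ℤ) := by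
    intro t
    rw [zpow_neg, one_div]
    norm_num
  simp_rw [hz]
  rw [integral_zpow (Or.inr ⟨by norm_num, Set.notMem_uIcc_of_lt hApos hBpos⟩)]
  have h2 : ((-2 : ℤ) + 1 : ℝ) = -1 := by norm_num
  rw [hA, hB]
  norm_num
  have hne : (-1 - x^2 : ℝ) ≠ 0 := by nlinarith
  rw [div_sub_div_same, div_div]
  rw [div_eq_div_iff (by intro h; nlinarith) (by positivity)]
  ring

/-- For `k ≥ 3` and `0 < z ≤ r_k = arsinh (cot (π/k))`, the integral of `(x-y)⁻²` over
the region of pairs `(x,y)` with `0 < x < tan (π/k)`, `-1/x ≤ y < 0` and `D x y ≤ z`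
equals `(π/k) · sinh z`. -/
theorem Lambda_small (k : ℕ) (hk : 3 ≤ k) (z : ℝ) (hz0 : 0 < z)
    (hz : z ≤ Real.arsinh (Real.cot (π / k))) :
    ∫ p : ℝ × ℝ in {p : ℝ × ℝ | 0 < p.1 ∧ p.1 < Real.tan (π / k) ∧
        -1 / p.1 ≤ p.2 ∧ p.2 < 0 ∧ D p.1 p.2 ≤ z}, 1 / (p.1 - p.2) ^ 2 =
      π / k * Real.sinh z := by
  have hk0 : (0:ℝ) < (k:ℝ) := by
    have : (3:ℝ) ≤ (k:ℝ) := by exact_mod_cast hk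
    linarith
  have hk2 : (2:ℝ) < (k:ℝ) := by
    have : (3:ℝ) ≤ (k:ℝ) := by exact_mod_cast hk
    linarith
  set θ : ℝ := π / k with hθdef
  have hθpos : 0 < θ := div_pos Real.pi_pos hk0
  have hθlt : θ < π / 2 := div_lt_div_of_pos_left Real.pi_pos (by norm_num) hk2
  set a : ℝ := Real.tan θ with hadef
  have ha : 0 < a := Real.tan_pos_of_pos_of_lt_pi_div_two hθpos hθlt
  set s : ℝ := Real.sinh z with hsdef
  have hs : 0 < s := by rw [hsdef]; exact Real.sinh_pos_iff.mpr hz0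
  have hcos : 0 < Real.cos θ := Real.cos_pos_of_mem_Ioo ⟨by linarith, hθlt⟩
  have hsin : 0 < Real.sin θ := Real.sin_pos_of_pos_of_lt_pi hθpos (by linarith [Real.pi_pos])
  have hscot : s ≤ Real.cos θ / Real.sin θ := by
    have h := Real.sinh_le_sinh.mpr hz
    rw [Real.sinh_arsinh] at h
    rw [Real.cot_eq_cos_div_sin] at h
    exact h
  have hsa : s * a ≤ 1 := by
    have h1 : s * a ≤ (Real.cos θ / Real.sin θ) * a :=
      mul_le_mul_of_nonneg_right hscot ha.le
    have h2 : (Real.cos θ / Real.sin θ) * a = 1 := by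
      rw [hadef, Real.tan_eq_sin_div_cos]
      field_simp
    linarith
  have hsx : ∀ x : ℝ, 0 < x → x < a → s * x < 1 := by
    intro x hx0 hxa
    have : s * x < s * a := by exact mul_lt_mul_of_pos_left hxa hs
    linarith
  -- equivalence of the D-condition
  have hDiff : ∀ x y : ℝ, 0 < x → y < 0 → 0 ≤ 1 + x * y →
      (D x y ≤ z ↔ 1 + x * y ≤ (x - y) * s) := by
    intro x y hx0 hy0 h1
    have hxy : (0:ℝ) < x - y := by linarith
    rw [D_eq hx0 hy0 h1]
    constructor
    · intro h
      have h2 := Real.sinh_le_sinh.mpr h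
      rw [Real.sinh_arsinh] at h2
      have := (div_le_iff₀ hxy).mp h2
      linarith
    · intro h
      rw [show z = Real.arsinh (Real.sinh z) from (Real.arsinh_sinh z).symm]
      exact Real.arsinh_le_arsinh.mpr ((div_le_iff₀ hxy).mpr (by rw [← hsdef]; linarith))
  -- the region as an elementary set
  set A' : Set (ℝ × ℝ) := {p : ℝ × ℝ | (0 < p.1 ∧ p.1 < a) ∧
      (-1/p.1 ≤ p.2 ∧ p.2 ≤ (s*p.1-1)/(p.1+s))} with hA'
  have hset : {p : ℝ × ℝ | 0 < p.1 ∧ p.1 < Real.tan (π / k) ∧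
      -1 / p.1 ≤ p.2 ∧ p.2 < 0 ∧ D p.1 p.2 ≤ z} = A' := by
    ext ⟨x, y⟩
    simp only [hA', Set.mem_setOf_eq]
    constructor
    · rintro ⟨hx0, hxa, hly, hy0, hD⟩
      have h1 : 0 ≤ 1 + x * y := by
        have := (div_le_iff₀ hx0).mp hly
        nlinarith
      refine ⟨⟨hx0, hxa⟩, hly, ?_⟩
      have h2 := (hDiff x y hx0 hy0 h1).mp hD
      rw [le_div_iff₀ (by linarith : (0:ℝ) < x + s)]
      nlinarith
    · rintro ⟨⟨hx0, hxa⟩, hly, hyY⟩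
      have hY0 : (s*x-1)/(x+s) < 0 :=
        div_neg_of_neg_of_pos (by have := hsx x hx0 hxa; linarith) (by linarith)
      have hy0 : y < 0 := lt_of_le_of_lt hyY hY0
      have h1 : 0 ≤ 1 + x * y := by
        have := (div_le_iff₀ hx0).mp hly
        nlinarith
      refine ⟨hx0, hxa, hly, hy0, (hDiff x y hx0 hy0 h1).mpr ?_⟩
      have := (le_div_iff₀ (by linarith : (0:ℝ) < x + s)).mp hyY
      nlinarith
  rw [hset]
  -- measurability
  have hYmeas : Measurable fun x : ℝ => (s*x-1)/(x+s) :=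
    ((measurable_id.const_mul s).sub measurable_const).div
      (measurable_id.add_const s)
  have hA'm : MeasurableSet A' := by
    have : A' = ({p : ℝ × ℝ | 0 < p.1} ∩ {p : ℝ × ℝ | p.1 < a}) ∩
        ({p : ℝ × ℝ | -1/p.1 ≤ p.2} ∩ {p : ℝ × ℝ | p.2 ≤ (s*p.1-1)/(p.1+s)}) := by
      ext p
      simp only [hA', Set.mem_setOf_eq, Set.mem_inter_iff]
      try tauto
    rw [this]
    exact ((measurableSet_lt measurable_const measurable_fst).inter
        (measurableSet_lt measurable_fst measurable_const)).inter
      ((measurableSet_le (measurable_const.div measurable_fst) measurable_snd).inter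
        (measurableSet_le measurable_snd (hYmeas.comp measurable_fst)))
  have hfm : Measurable fun p : ℝ × ℝ => 1/(p.1 - p.2)^2 :=
    measurable_const.div ((measurable_fst.sub measurable_snd).pow_const 2)
  set g : ℝ × ℝ → ℝ := A'.indicator (fun p => 1/(p.1 - p.2)^2) with hg
  have hg_nonneg : ∀ p, 0 ≤ g p := by
    intro p
    apply Set.indicator_nonneg
    intro q _
    positivity
  have hslice1 : ∀ x : ℝ, 0 < x → x < a →
      (fun y => g (x, y)) =
        Set.indicator (Set.Icc (-1/x) ((s*x-1)/(x+s))) (fun y => 1/(x - y)^2) := by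
    intro x hx0 hxa
    funext y
    simp only [hg, Set.indicator_apply, hA', Set.mem_setOf_eq, Set.mem_Icc, hx0, hxa,
      true_and, and_true]
  have hslice2 : ∀ x : ℝ, ¬(0 < x ∧ x < a) → (fun y => g (x, y)) = (fun _ => (0:ℝ)) := by
    intro x hx
    funext y
    simp only [hg, Set.indicator_apply, hA', Set.mem_setOf_eq]
    rw [if_neg]
    tauto
  have hinner : ∀ x : ℝ, (∫ y, g (x, y)) =
      Set.indicator (Set.Ioo 0 a) (fun t => s/(1+t^2)) x := by
    intro x
    by_cases hx : 0 < x ∧ x < a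
    · rw [hslice1 x hx.1 hx.2, MeasureTheory.integral_indicator measurableSet_Icc,
        Set.indicator_of_mem (Set.mem_Ioo.mpr hx)]
      exact inner_int rfl rfl hx.1 hs (hsx x hx.1 hx.2)
    · rw [hslice2 x hx, Set.indicator_of_notMem (by rw [Set.mem_Ioo]; exact hx)]
      simp
  have hintslice : ∀ x : ℝ, Integrable (fun y => g (x, y)) volume := by
    intro x
    by_cases hx : 0 < x ∧ x < a
    · rw [hslice1 x hx.1 hx.2]
      rw [integrable_indicator_iff measurableSet_Icc]
      apply ContinuousOn.integrableOn_Icc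
      apply ContinuousOn.div continuousOn_const
      · exact ((continuous_const.sub continuous_id).pow 2).continuousOn
      · intro y hy
        have hY0 : (s*x-1)/(x+s) < 0 :=
          div_neg_of_neg_of_pos (by have := hsx x hx.1 hx.2; linarith) (by linarith [hx.1])
        have : x - y > 0 := by
          have := hy.2
          simp only [Set.mem_Icc] at hy
          nlinarith [hy.2, hx.1]
        positivity
    · rw [hslice2 x hx]
      exact integrable_zero _ _ _
  have hgnorm : ∀ x : ℝ, (fun y => ‖g (x, y)‖) = fun y => g (x, y) := by
    intro x
    funext y
    rw [Real.norm_eq_abs, abs_of_nonneg (hg_nonneg _)]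
  have hindint : Integrable (Set.indicator (Set.Ioo 0 a) (fun t : ℝ => s/(1+t^2))) volume := by
    apply Integrable.indicator _ measurableSet_Ioo
    have : (fun t : ℝ => s/(1+t^2)) = fun t : ℝ => s * (1+t^2)⁻¹ := by
      funext t; rw [div_eq_mul_inv]
    rw [this]
    exact integrable_inv_one_add_sq.const_mul s
  have hgaesm : AEStronglyMeasurable g ((volume : Measure ℝ).prod volume) := by
    rw [← MeasureTheory.Measure.volume_eq_prod ℝ ℝ]
    exact (hfm.indicator hA'm).aestronglyMeasurable
  have hgint : Integrable g ((volume : Measure ℝ).prod volume) := by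
    rw [MeasureTheory.integrable_prod_iff hgaesm]
    constructor
    · exact MeasureTheory.ae_of_all _ hintslice
    · have : (fun x => ∫ y, ‖g (x, y)‖) =
          Set.indicator (Set.Ioo 0 a) (fun t => s/(1+t^2)) := by
        funext x
        rw [hgnorm x]
        exact hinner x
      rw [this]
      exact hindint
  calc ∫ p : ℝ × ℝ in A', 1/(p.1 - p.2)^2 = ∫ p : ℝ × ℝ, g p := by
        rw [hg, MeasureTheory.integral_indicator hA'm]
    _ = ∫ x : ℝ, ∫ y : ℝ, g (x, y) := by
        rw [MeasureTheory.Measure.volume_eq_prod ℝ ℝ, MeasureTheory.integral_prod _ hgint]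
    _ = ∫ x : ℝ, Set.indicator (Set.Ioo 0 a) (fun t => s/(1+t^2)) x := by
        simp_rw [hinner]
    _ = ∫ x : ℝ in Set.Ioo 0 a, s/(1+x^2) := by
        rw [MeasureTheory.integral_indicator measurableSet_Ioo]
    _ = ∫ x : ℝ in (0:ℝ)..a, s/(1+x^2) := by
        rw [intervalIntegral.integral_of_le ha.le]
        try rw [MeasureTheory.integral_Ioc_eq_integral_Ioo]
    _ = s * ∫ x : ℝ in (0:ℝ)..a, (1+x^2)⁻¹ := by
        simp_rw [div_eq_mul_inv]
        rw [intervalIntegral.integral_const_mul]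
    _ = s * (Real.arctan a - Real.arctan 0) := by
        rw [integral_inv_one_add_sq]
    _ = π / k * Real.sinh z := by
        rw [Real.arctan_zero, hadef, Real.arctan_tan (by linarith) hθlt, hsdef]
        ring
end

section
/- Let k ≥ 3 be an integer and let z > r_k = arsinh(cot(π/k)). Then the Lebesgue double integral of (x − y)^{−2} over the plane region Ω = {(x,y) ∈ ℝ² : 0 < x < tan(π/k), −1/x ≤ y < 0, and D(x,y) ≤ z} equals sinh z · arctan(1/sinh z) + log(sin(π/k)·cosh z). -/
open Real MeasureTheory

lemma mem_geodesic_iff {x y : ℝ} (hyx : y < x) (w : UpperHalfPlane) :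
    w ∈ geodesicUHP x y ↔ (w.re - (x + y) / 2) ^ 2 + w.im ^ 2 = ((x - y) / 2) ^ 2 := by
  have hr : (0:ℝ) ≤ (x - y) / 2 := by linarith
  have habs : |x - y| = x - y := abs_of_pos (by linarith)
  have hns : Complex.normSq ((w : ℂ) - (((x + y) / 2 : ℝ) : ℂ))
      = (w.re - (x + y) / 2) ^ 2 + w.im ^ 2 := by
    simp only [Complex.normSq_apply, Complex.sub_re, Complex.sub_im, Complex.ofReal_re,
      Complex.ofReal_im, UpperHalfPlane.coe_re, UpperHalfPlane.coe_im]
    ring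
  have : w ∈ geodesicUHP x y ↔
      Real.sqrt ((w.re - (x + y) / 2) ^ 2 + w.im ^ 2) = (x - y) / 2 := by
    rw [geodesicUHP, Set.mem_setOf_eq, habs, Complex.norm_def, hns]
  rw [this, (Real.sqrt_eq_iff_eq_sq (by positivity) hr).trans eq_comm]
  exact eq_comm

lemma cosh_dist_I (w : UpperHalfPlane) :
    Real.cosh (dist UpperHalfPlane.I w) = (w.re ^ 2 + w.im ^ 2 + 1) / (2 * w.im) := by
  have him : 0 < w.im := w.im_pos
  rw [UpperHalfPlane.cosh_dist, Complex.dist_eq, Complex.sq_norm]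
  have h1 : Complex.normSq ((UpperHalfPlane.I : ℂ) - (w : ℂ)) =
      w.re ^ 2 + (1 - w.im) ^ 2 := by
    simp only [Complex.normSq_apply, Complex.sub_re, Complex.sub_im,
      UpperHalfPlane.coe_I, Complex.I_re, Complex.I_im,
      UpperHalfPlane.coe_re, UpperHalfPlane.coe_im]
    ring
  rw [h1, UpperHalfPlane.I_im]
  field_simp
  ring


set_option maxHeartbeats 2000000 in
lemma D_le_iff {x y z : ℝ} (hx : 0 < x) (hy : y < 0) (hxy : -1 / x ≤ y) (hz0 : 0 ≤ z) :
    D x y ≤ z ↔ Real.sqrt ((x ^ 2 + 1) * (y ^ 2 + 1)) ≤ Real.cosh z * (x - y) := by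
  have hyx : y < x := hy.trans hx
  have hxy1 : 0 ≤ x * y + 1 := by
    have h := (div_le_iff₀ hx).mp hxy
    nlinarith
  have hsub : 0 < x - y := sub_pos.mpr hyx
  set Q := Real.sqrt ((x ^ 2 + 1) * (y ^ 2 + 1)) with hQdef
  have hQpos : 0 < Q := Real.sqrt_pos.mpr (by positivity)
  have hQ2 : Q ^ 2 = (x ^ 2 + 1) * (y ^ 2 + 1) := Real.sq_sqrt (by positivity)
  -- lower bound at every point of the geodesic
  have key : ∀ w : UpperHalfPlane, w ∈ geodesicUHP x y →
      Q ≤ Real.cosh (dist UpperHalfPlane.I w) * (x - y) := by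
    intro w hw
    have hv : 0 < w.im := w.im_pos
    have hcirc := (mem_geodesic_iff hyx w).mp hw
    set u := w.re
    set v := w.im
    have hcosh := cosh_dist_I w
    have hstep : (x ^ 2 + 1) * (y ^ 2 + 1) ≤
        (Real.cosh (dist UpperHalfPlane.I w) * (x - y)) ^ 2 := by
      rw [hcosh]
      have heq : ((u ^ 2 + v ^ 2 + 1) / (2 * v) * (x - y)) ^ 2
          = (u ^ 2 + v ^ 2 + 1) ^ 2 * (x - y) ^ 2 / (4 * v ^ 2) := by
        field_simp
        ring
      rw [heq, le_div_iff₀ (by positivity)]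
      have hC0 : (u - (x + y) / 2) ^ 2 + v ^ 2 - ((x - y) / 2) ^ 2 = 0 := by
        linarith [hcirc]
      have hid : (u ^ 2 + v ^ 2 + 1) ^ 2 * (x - y) ^ 2
            - 4 * v ^ 2 * ((x ^ 2 + 1) * (y ^ 2 + 1))
          = 4 * ((u - (x + y) / 2) * ((x ^ 2 + y ^ 2 + 2) / 2)
              + (x + y) * ((x - y) / 2) ^ 2) ^ 2
            + (4 * (2 * ((x - y) / 2) ^ 2 * ((x ^ 2 + y ^ 2 + 2) / 2
                + (x + y) * (u - (x + y) / 2))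
              + ((x - y) / 2) ^ 2 * ((u - (x + y) / 2) ^ 2 + v ^ 2 - ((x - y) / 2) ^ 2)
              - (x ^ 2 + 1) * (y ^ 2 + 1)))
              * ((u - (x + y) / 2) ^ 2 + v ^ 2 - ((x - y) / 2) ^ 2) := by
        ring
      rw [hC0] at hid
      nlinarith [hid, sq_nonneg ((u - (x + y) / 2) * ((x ^ 2 + y ^ 2 + 2) / 2)
        + (x + y) * ((x - y) / 2) ^ 2)]
    have hnn : 0 ≤ Real.cosh (dist UpperHalfPlane.I w) * (x - y) :=
      mul_nonneg (Real.cosh_pos _).le hsub.le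
    calc Q ≤ Real.sqrt ((Real.cosh (dist UpperHalfPlane.I w) * (x - y)) ^ 2) :=
          Real.sqrt_le_sqrt hstep
      _ = _ := Real.sqrt_sq hnn
  -- the minimizing point
  set A : ℝ := (x ^ 2 + y ^ 2 + 2) / 2 with hAdef
  have hA : 0 < A := by rw [hAdef]; positivity
  have hA' : A ≠ 0 := ne_of_gt hA
  have hQ' : Q ≠ 0 := ne_of_gt hQpos
  have hQA : Q ^ 2 = A ^ 2 - (x + y) ^ 2 * ((x - y) / 2) ^ 2 := by rw [hQ2, hAdef]; ring
  set u₀ : ℝ := (x + y) / 2 - (x + y) * ((x - y) / 2) ^ 2 / A with hu₀def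
  set v₀ : ℝ := ((x - y) / 2) * Q / A with hv₀def
  have hv₀ : 0 < v₀ := by
    rw [hv₀def]
    positivity
  set w₀ : UpperHalfPlane := ⟨⟨u₀, v₀⟩, hv₀⟩ with hw₀def
  have hw₀re : w₀.re = u₀ := rfl
  have hw₀im : w₀.im = v₀ := rfl
  have hmemeq : (u₀ - (x + y) / 2) ^ 2 + v₀ ^ 2 = ((x - y) / 2) ^ 2 := by
    calc (u₀ - (x + y) / 2) ^ 2 + v₀ ^ 2
        = ((x + y) ^ 2 * ((x - y) / 2) ^ 4 + ((x - y) / 2) ^ 2 * Q ^ 2) / A ^ 2 := by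
          rw [hu₀def, hv₀def]; field_simp; ring
      _ = (((x - y) / 2) ^ 2 * A ^ 2) / A ^ 2 := by rw [hQA]; ring_nf
      _ = ((x - y) / 2) ^ 2 := by field_simp
  have hmem₀ : w₀ ∈ geodesicUHP x y := by
    rw [mem_geodesic_iff hyx, hw₀re, hw₀im]
    exact hmemeq
  have hsum : u₀ ^ 2 + v₀ ^ 2 + 1 = Q ^ 2 / A := by
    have h1 : u₀ ^ 2 + v₀ ^ 2 + 1
        = ((x - y) / 2) ^ 2 + (x + y) * u₀ - ((x + y) / 2) ^ 2 + 1 := by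
      nlinarith [hmemeq]
    rw [h1, hu₀def, eq_div_iff hA', hQA]
    field_simp
    ring
  have hcosh₀ : Real.cosh (dist UpperHalfPlane.I w₀) * (x - y) = Q := by
    rw [cosh_dist_I w₀, hw₀re, hw₀im, hsum, hv₀def]
    field_simp
  constructor
  · intro h
    set b := Real.arsinh ((x * y + 1) / (x - y)) with hbdef
    have hb0 : 0 ≤ b := Real.arsinh_nonneg_iff.mpr (by positivity)
    have hcoshb : Real.cosh b = Q / (x - y) := by
      rw [hbdef, Real.cosh_arsinh]
      rw [show 1 + ((x * y + 1) / (x - y)) ^ 2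
          = ((x ^ 2 + 1) * (y ^ 2 + 1)) / (x - y) ^ 2 by field_simp; ring]
      rw [Real.sqrt_div (by positivity), Real.sqrt_sq hsub.le, hQdef]
    have hble : ∀ w ∈ geodesicUHP x y, b ≤ dist UpperHalfPlane.I w := by
      intro w hw
      have h1 := key w hw
      have h2 : Real.cosh b ≤ Real.cosh (dist UpperHalfPlane.I w) := by
        rw [hcoshb, div_le_iff₀ hsub]
        exact h1
      have h3 := Real.cosh_le_cosh.mp h2
      rwa [abs_of_nonneg hb0, abs_of_nonneg dist_nonneg] at h3
    have hbD : b ≤ D x y := by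
      by_contra hc
      push_neg at hc
      obtain ⟨w, hw, hwd⟩ := (Metric.infDist_lt_iff ⟨w₀, hmem₀⟩).mp hc
      exact absurd hwd (not_lt.mpr (hble w hw))
    have hbz : b ≤ z := hbD.trans h
    have h4 : Real.cosh b ≤ Real.cosh z :=
      Real.cosh_le_cosh.mpr (by rwa [abs_of_nonneg hb0, abs_of_nonneg hz0])
    rw [hcoshb, div_le_iff₀ hsub] at h4
    exact h4
  · intro h
    have h1 : Real.cosh (dist UpperHalfPlane.I w₀) ≤ Real.cosh z := by
      have h2 : Real.cosh (dist UpperHalfPlane.I w₀) * (x - y) ≤ Real.cosh z * (x - y) := by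
        rw [hcosh₀]; exact h
      exact le_of_mul_le_mul_right h2 hsub
    have h2 := Real.cosh_le_cosh.mp h1
    rw [abs_of_nonneg dist_nonneg, abs_of_nonneg hz0] at h2
    exact (Metric.infDist_le_dist_of_mem hmem₀).trans h2

lemma cond_iff {x y s : ℝ} (hx : 0 < x) (hy : y < 0) (hxy : -1 / x ≤ y) (hs : 0 < s) :
    Real.sqrt ((x ^ 2 + 1) * (y ^ 2 + 1)) ≤ Real.sqrt (1 + s ^ 2) * (x - y) ↔
      y * (x + s) ≤ s * x - 1 := by
  have hyx : y < x := hy.trans hx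
  have hsub : 0 < x - y := sub_pos.mpr hyx
  have hxy1 : 0 ≤ x * y + 1 := by
    have h := (div_le_iff₀ hx).mp hxy
    nlinarith
  have hiff : (y * (x + s) ≤ s * x - 1) ↔ x * y + 1 ≤ s * (x - y) := by
    constructor <;> intro h <;> nlinarith
  rw [hiff]
  constructor
  · intro h
    have hB : 0 ≤ Real.sqrt (1 + s ^ 2) * (x - y) :=
      mul_nonneg (Real.sqrt_nonneg _) hsub.le
    have h2 : (x ^ 2 + 1) * (y ^ 2 + 1) ≤ (1 + s ^ 2) * (x - y) ^ 2 := by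
      calc (x ^ 2 + 1) * (y ^ 2 + 1)
          = Real.sqrt ((x ^ 2 + 1) * (y ^ 2 + 1)) ^ 2 := (Real.sq_sqrt (by positivity)).symm
        _ ≤ (Real.sqrt (1 + s ^ 2) * (x - y)) ^ 2 := by
            exact pow_le_pow_left₀ (Real.sqrt_nonneg _) h 2
        _ = (1 + s ^ 2) * (x - y) ^ 2 := by
            rw [mul_pow, Real.sq_sqrt (by positivity)]
    nlinarith [h2, hxy1, mul_nonneg hs.le hsub.le]
  · intro h
    have h2 : (x ^ 2 + 1) * (y ^ 2 + 1) ≤ (1 + s ^ 2) * (x - y) ^ 2 := by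
      nlinarith [mul_nonneg hs.le hsub.le, hxy1]
    calc Real.sqrt ((x ^ 2 + 1) * (y ^ 2 + 1))
        ≤ Real.sqrt ((1 + s ^ 2) * (x - y) ^ 2) := Real.sqrt_le_sqrt h2
      _ = Real.sqrt (1 + s ^ 2) * (x - y) := by
          rw [Real.sqrt_mul (by positivity), Real.sqrt_sq hsub.le]

lemma integral_inv_sq_sub {x b t : ℝ} (hbt : b ≤ t) (ht : t < x) :
    ∫ y in b..t, 1 / (x - y) ^ 2 = (x - t)⁻¹ - (x - b)⁻¹ := by
  have h1 : ∫ y in b..t, 1 / (x - y) ^ 2 = ∫ y in b..t, (x - y) ^ (-2 : ℤ) := by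
    apply intervalIntegral.integral_congr
    intro y _
    simp only [zpow_neg, one_div]
    norm_cast
  rw [h1, intervalIntegral.integral_comp_sub_left (fun u => u ^ (-2 : ℤ)) x]
  have hxb : 0 < x - b := by linarith
  have hxt : 0 < x - t := by linarith
  have h0 : (0 : ℝ) ∉ Set.uIcc (x - t) (x - b) := by
    rw [Set.mem_uIcc]
    push_neg
    constructor <;> intro h <;> nlinarith
  rw [integral_zpow (Or.inr ⟨by norm_num, h0⟩)]
  norm_num
  ring

set_option maxHeartbeats 1000000 in
/-- For `k ≥ 3` and `z > r_k = arsinh (cot (π/k))`, the integral of `(x-y)⁻²` over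
the region of pairs `(x,y)` with `0 < x < tan (π/k)`, `-1/x ≤ y < 0` and `D x y ≤ z`
equals `sinh z · arctan (1/sinh z) + log (sin (π/k) · cosh z)`. -/
theorem Lambda_large (k : ℕ) (hk : 3 ≤ k) (z : ℝ)
    (hz : Real.arsinh (Real.cot (π / k)) < z) :
    ∫ p : ℝ × ℝ in {p : ℝ × ℝ | 0 < p.1 ∧ p.1 < Real.tan (π / k) ∧
        -1 / p.1 ≤ p.2 ∧ p.2 < 0 ∧ D p.1 p.2 ≤ z}, 1 / (p.1 - p.2) ^ 2 =
      Real.sinh z * Real.arctan (1 / Real.sinh z) +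
        Real.log (Real.sin (π / k) * Real.cosh z) := by
  have hk0 : (0:ℝ) < (k:ℝ) := by exact_mod_cast (by omega : 0 < k)
  have hk2 : (2:ℝ) < (k:ℝ) := by exact_mod_cast (by omega : 2 < k)
  have hθ1 : 0 < π / k := div_pos Real.pi_pos hk0
  have hθ2 : π / k < π / 2 := div_lt_div_of_pos_left Real.pi_pos (by norm_num) hk2
  have hsin : 0 < Real.sin (π / k) :=
    Real.sin_pos_of_pos_of_lt_pi hθ1 (by linarith [Real.pi_pos])
  have hcos : 0 < Real.cos (π / k) := Real.cos_pos_of_mem_Ioo ⟨by linarith, hθ2⟩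
  set a := Real.tan (π / k) with hadef
  have ha : 0 < a := by rw [hadef, Real.tan_eq_sin_div_cos]; positivity
  have hcot : Real.cot (π / k) = 1 / a := by
    rw [hadef, Real.cot_eq_cos_div_sin, Real.tan_eq_sin_div_cos, one_div_div]
  set s := Real.sinh z with hsdef
  have hz0 : 0 < z := by
    have h0 : 0 ≤ Real.arsinh (Real.cot (π / k)) :=
      Real.arsinh_nonneg_iff.mpr (by rw [hcot]; positivity)
    linarith
  have hs1 : 1 / a < s := by
    have h := Real.sinh_lt_sinh.mpr hz
    rwa [Real.sinh_arsinh, hcot] at h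
  have hs0 : 0 < s := lt_trans (by positivity) hs1
  have hsa : 1 < s * a := by rw [div_lt_iff₀ ha] at hs1; linarith
  set m := 1 / s with hmdef
  have hm0 : 0 < m := by rw [hmdef]; positivity
  have hma : m < a := by rw [hmdef, div_lt_iff₀ hs0]; linarith
  have hcoshz : Real.cosh z = Real.sqrt (1 + s ^ 2) := by
    rw [show (1 : ℝ) + s ^ 2 = Real.cosh z ^ 2 by rw [Real.cosh_sq, hsdef]; ring,
      Real.sqrt_sq (Real.cosh_pos z).le]
  -- replace the distance condition by an algebraic one
  have hset : {p : ℝ × ℝ | 0 < p.1 ∧ p.1 < a ∧ -1 / p.1 ≤ p.2 ∧ p.2 < 0 ∧ D p.1 p.2 ≤ z}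
      = {p : ℝ × ℝ | 0 < p.1 ∧ p.1 < a ∧ -1 / p.1 ≤ p.2 ∧ p.2 < 0 ∧
          p.2 * (p.1 + s) ≤ s * p.1 - 1} := by
    ext ⟨px, py⟩
    simp only [Set.mem_setOf_eq]
    constructor
    · rintro ⟨h1, h2, h3, h4, h5⟩
      refine ⟨h1, h2, h3, h4, ?_⟩
      have h6 := (D_le_iff h1 h4 h3 hz0.le).mp h5
      rw [hcoshz] at h6
      exact (cond_iff h1 h4 h3 hs0).mp h6
    · rintro ⟨h1, h2, h3, h4, h5⟩
      refine ⟨h1, h2, h3, h4, ?_⟩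
      rw [D_le_iff h1 h4 h3 hz0.le, hcoshz]
      exact (cond_iff h1 h4 h3 hs0).mpr h5
  rw [hset]
  set S := {p : ℝ × ℝ | 0 < p.1 ∧ p.1 < a ∧ -1 / p.1 ≤ p.2 ∧ p.2 < 0 ∧
      p.2 * (p.1 + s) ≤ s * p.1 - 1} with hSdef
  have hSm : MeasurableSet S := by
    have hSeq : S = ({p : ℝ × ℝ | 0 < p.1} ∩ {p : ℝ × ℝ | p.1 < a} ∩
        {p : ℝ × ℝ | -1 / p.1 ≤ p.2} ∩ {p : ℝ × ℝ | p.2 < 0} ∩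
        {p : ℝ × ℝ | p.2 * (p.1 + s) ≤ s * p.1 - 1}) := by
      ext p
      simp only [hSdef, Set.mem_setOf_eq, Set.mem_inter_iff]
      tauto
    rw [hSeq]
    refine ((((measurableSet_lt measurable_const measurable_fst).inter
      (measurableSet_lt measurable_fst measurable_const)).inter
      (measurableSet_le (measurable_const.div measurable_fst) measurable_snd)).inter
      (measurableSet_lt measurable_snd measurable_const)).inter
      (measurableSet_le (measurable_snd.mul (measurable_fst.add_const s))
        ((measurable_fst.const_mul s).sub_const 1))
  set F : ℝ → ℝ := fun x => if x * s < 1 then s / (x ^ 2 + 1) else 1 / x - x / (x ^ 2 + 1)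
    with hFdef
  have hFnn : ∀ x ∈ Set.Ioo (0:ℝ) a, 0 ≤ F x := by
    intro x hx
    rw [hFdef]
    by_cases hxs : x * s < 1
    · simp only [if_pos hxs]
      positivity
    · simp only [if_neg hxs]
      have hx0 : 0 < x := hx.1
      have he : 1 / x - x / (x ^ 2 + 1) = 1 / (x * (x ^ 2 + 1)) := by
        field_simp
        ring
      rw [he]
      positivity
  have hfm : Measurable fun p : ℝ × ℝ => 1 / (p.1 - p.2) ^ 2 := by
    simp only [one_div]
    exact ((measurable_fst.sub measurable_snd).pow_const 2).inv
  have h1 : ∫ p in S, 1 / (p.1 - p.2) ^ 2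
      = (∫⁻ p in S, ENNReal.ofReal (1 / (p.1 - p.2) ^ 2)).toReal := by
    apply integral_eq_lintegral_of_nonneg_ae
    · exact ae_of_all _ fun p => by positivity
    · exact hfm.aestronglyMeasurable
  have h2 : ∫⁻ p in S, ENNReal.ofReal (1 / (p.1 - p.2) ^ 2)
      = ∫⁻ x in Set.Ioo 0 a, ENNReal.ofReal (F x) := by
    rw [← lintegral_indicator hSm, ← lintegral_indicator measurableSet_Ioo,
      Measure.volume_eq_prod,
      lintegral_prod _ ((hfm.ennreal_ofReal.indicator hSm).aemeasurable)]
    apply lintegral_congr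
    intro x
    by_cases hx : x ∈ Set.Ioo (0:ℝ) a
    · rw [Set.indicator_of_mem hx]
      obtain ⟨hx0, hxa⟩ := hx
      have hxs : 0 < x + s := by linarith
      by_cases hcase : x * s < 1
      · set t := (s * x - 1) / (x + s) with htdef
        have ht0 : t < 0 := div_neg_of_neg_of_pos (by nlinarith) hxs
        have htx : t < x := lt_trans ht0 hx0
        have hbt : -1 / x ≤ t := by
          rw [htdef, div_le_div_iff₀ hx0 hxs]
          nlinarith [sq_nonneg x]
        have hsec : ∀ y : ℝ,
            S.indicator (fun p => ENNReal.ofReal (1 / (p.1 - p.2) ^ 2)) (x, y)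
            = (Set.Icc (-1 / x) t).indicator
                (fun y => ENNReal.ofReal (1 / (x - y) ^ 2)) y := by
          intro y
          by_cases hmem : (x, y) ∈ S
          · have hy : y ∈ Set.Icc (-1 / x) t := by
              obtain ⟨_, _, h3, _, h5⟩ := hmem
              exact ⟨h3, (le_div_iff₀ hxs).mpr h5⟩
            rw [Set.indicator_of_mem hmem, Set.indicator_of_mem hy]
          · have hy : y ∉ Set.Icc (-1 / x) t := by
              intro hy
              exact hmem ⟨hx0, hxa, hy.1, lt_of_le_of_lt hy.2 ht0,
                (le_div_iff₀ hxs).mp hy.2⟩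
            rw [Set.indicator_of_notMem hmem, Set.indicator_of_notMem hy]
        rw [lintegral_congr hsec, lintegral_indicator measurableSet_Icc]
        have hco : ContinuousOn (fun y => 1 / (x - y) ^ 2) (Set.Icc (-1 / x) t) := by
          apply continuousOn_const.div
          · exact (continuousOn_const.sub continuousOn_id).pow 2
          · intro y hy
            exact pow_ne_zero 2 (ne_of_gt (by linarith [hy.2] : (0:ℝ) < x - y))
        have hint : IntegrableOn (fun y => 1 / (x - y) ^ 2) (Set.Icc (-1 / x) t) :=
          hco.integrableOn_Icc
        rw [← ofReal_integral_eq_lintegral_ofReal hint (ae_of_all _ fun y => by positivity)]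
        congr 1
        rw [integral_Icc_eq_integral_Ioc, ← intervalIntegral.integral_of_le hbt,
          integral_inv_sq_sub hbt htx, hFdef]
        simp only [if_pos hcase]
        have hxt : x - t = (x ^ 2 + 1) / (x + s) := by
          rw [htdef]
          field_simp
          ring
        have hxb : x - -1 / x = (x ^ 2 + 1) / x := by
          field_simp
          ring
        rw [hxt, hxb, inv_div, inv_div, div_sub_div_same]
        congr 1
        ring
      · have hsx1 : 1 ≤ s * x := by nlinarith [not_lt.mp hcase]
        have hb0 : -1 / x < 0 := div_neg_of_neg_of_pos (by norm_num) hx0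
        have hsec : ∀ y : ℝ,
            S.indicator (fun p => ENNReal.ofReal (1 / (p.1 - p.2) ^ 2)) (x, y)
            = (Set.Ico (-1 / x) 0).indicator
                (fun y => ENNReal.ofReal (1 / (x - y) ^ 2)) y := by
          intro y
          by_cases hmem : (x, y) ∈ S
          · have hy : y ∈ Set.Ico (-1 / x) 0 := by
              obtain ⟨_, _, h3, h4, _⟩ := hmem
              exact ⟨h3, h4⟩
            rw [Set.indicator_of_mem hmem, Set.indicator_of_mem hy]
          · have hy : y ∉ Set.Ico (-1 / x) 0 := by
              intro hy
              refine hmem ⟨hx0, hxa, hy.1, hy.2, ?_⟩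
              nlinarith [hy.2, hsx1, hxs]
            rw [Set.indicator_of_notMem hmem, Set.indicator_of_notMem hy]
        rw [lintegral_congr hsec, lintegral_indicator measurableSet_Ico]
        have hco : ContinuousOn (fun y => 1 / (x - y) ^ 2) (Set.Icc (-1 / x) 0) := by
          apply continuousOn_const.div
          · exact (continuousOn_const.sub continuousOn_id).pow 2
          · intro y hy
            exact pow_ne_zero 2 (ne_of_gt (by linarith [hy.2] : (0:ℝ) < x - y))
        have hint : IntegrableOn (fun y => 1 / (x - y) ^ 2) (Set.Ico (-1 / x) 0) :=
          hco.integrableOn_Icc.mono_set Set.Ico_subset_Icc_self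
        rw [← ofReal_integral_eq_lintegral_ofReal hint (ae_of_all _ fun y => by positivity)]
        congr 1
        rw [integral_Ico_eq_integral_Ioo, ← integral_Ioc_eq_integral_Ioo,
          ← intervalIntegral.integral_of_le hb0.le,
          integral_inv_sq_sub hb0.le hx0, hFdef]
        simp only [if_neg hcase]
        have hxb : x - -1 / x = (x ^ 2 + 1) / x := by
          field_simp
          ring
        rw [sub_zero, hxb, inv_div]
        congr 1
        · exact one_div x |>.symm ▸ rfl
    · rw [Set.indicator_of_notMem hx]
      have hz' : ∀ y : ℝ,
          S.indicator (fun p => ENNReal.ofReal (1 / (p.1 - p.2) ^ 2)) (x, y) = 0 := by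
        intro y
        apply Set.indicator_of_notMem
        intro hmem
        exact hx ⟨hmem.1, hmem.2.1⟩
      simp only [hz', lintegral_zero]
  -- outer integral
  have hunion : Set.Ioo (0:ℝ) a = Set.Ioo 0 m ∪ Set.Ico m a := by
    ext w
    simp only [Set.mem_Ioo, Set.mem_Ico, Set.mem_union]
    constructor
    · rintro ⟨h1, h2⟩
      rcases lt_or_ge w m with h | h
      · exact Or.inl ⟨h1, h⟩
      · exact Or.inr ⟨h, h2⟩
    · rintro (⟨h1, h2⟩ | ⟨h1, h2⟩)
      · exact ⟨h1, h2.trans hma⟩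
      · exact ⟨lt_of_lt_of_le hm0 h1, h2⟩
  have hdisj : Disjoint (Set.Ioo (0:ℝ) m) (Set.Ico m a) := by
    apply Set.disjoint_left.mpr
    rintro w ⟨_, h2⟩ ⟨h3, _⟩
    exact absurd h3 (not_le.mpr h2)
  have hms : m * s = 1 := by
    rw [hmdef]
    field_simp
  have hEq1 : Set.EqOn F (fun x => s * (1 / (1 + x ^ 2))) (Set.Ioo 0 m) := by
    intro x hx
    have hxs : x * s < 1 := by
      calc x * s < m * s := mul_lt_mul_of_pos_right hx.2 hs0
        _ = 1 := hms
    rw [hFdef]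
    simp only [if_pos hxs, mul_one_div]
    congr 1
    ring
  have hEq2 : Set.EqOn F (fun x => 1 / x - x / (x ^ 2 + 1)) (Set.Ico m a) := by
    intro x hx
    have hxs : ¬ x * s < 1 := by
      push_neg
      calc (1:ℝ) = m * s := hms.symm
        _ ≤ x * s := mul_le_mul_of_nonneg_right hx.1 hs0.le
    rw [hFdef]
    simp only [if_neg hxs]
  have hc1 : Continuous fun x : ℝ => s * (1 / (1 + x ^ 2)) := by
    apply continuous_const.mul
    apply continuous_const.div
    · fun_prop
    · intro x
      positivity
  have hc2 : ContinuousOn (fun x : ℝ => 1 / x - x / (x ^ 2 + 1)) (Set.Icc m a) := by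
    apply ContinuousOn.sub
    · apply continuousOn_const.div continuousOn_id
      intro x hx
      exact ne_of_gt (lt_of_lt_of_le hm0 hx.1)
    · apply continuousOn_id.div (by fun_prop)
      intro x _
      positivity
  have hint1 : IntegrableOn F (Set.Ioo 0 m) :=
    ((hc1.integrableOn_Icc).mono_set Set.Ioo_subset_Icc_self).congr_fun
      (fun x hx => (hEq1 hx).symm) measurableSet_Ioo
  have hint2 : IntegrableOn F (Set.Ico m a) :=
    ((hc2.integrableOn_Icc).mono_set Set.Ico_subset_Icc_self).congr_fun
      (fun x hx => (hEq2 hx).symm) measurableSet_Ico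
  have hFint : IntegrableOn F (Set.Ioo 0 a) := by
    rw [hunion]
    exact hint1.union hint2
  have h3 : ∫⁻ x in Set.Ioo 0 a, ENNReal.ofReal (F x)
      = ENNReal.ofReal (∫ x in Set.Ioo 0 a, F x) :=
    (ofReal_integral_eq_lintegral_ofReal hFint
      ((ae_restrict_iff' measurableSet_Ioo).mpr (ae_of_all _ hFnn))).symm
  have hval : ∫ x in Set.Ioo 0 a, F x
      = s * Real.arctan m +
        (Real.log (a / m) - (Real.log (a ^ 2 + 1) - Real.log (m ^ 2 + 1)) / 2) := by
    rw [hunion, setIntegral_union hdisj measurableSet_Ico hint1 hint2]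
    congr 1
    · rw [setIntegral_congr_fun measurableSet_Ioo hEq1, ← integral_Ioc_eq_integral_Ioo,
        ← intervalIntegral.integral_of_le hm0.le, intervalIntegral.integral_const_mul,
        integral_one_div_one_add_sq, Real.arctan_zero, sub_zero]
    · rw [setIntegral_congr_fun measurableSet_Ico hEq2, integral_Ico_eq_integral_Ioo,
        ← integral_Ioc_eq_integral_Ioo, ← intervalIntegral.integral_of_le hma.le]
      have huIcc : Set.uIcc m a = Set.Icc m a := Set.uIcc_of_le hma.le
      have hii1 : IntervalIntegrable (fun x : ℝ => 1 / x) volume m a := by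
        apply intervalIntegral.intervalIntegrable_one_div
        · intro x hx
          rw [huIcc] at hx
          exact ne_of_gt (lt_of_lt_of_le hm0 hx.1)
        · exact continuousOn_id
      have hii2 : IntervalIntegrable (fun x : ℝ => x / (x ^ 2 + 1)) volume m a := by
        apply Continuous.intervalIntegrable
        apply continuous_id.div (by fun_prop)
        intro x
        positivity
      rw [intervalIntegral.integral_sub hii1 hii2]
      congr 1
      · apply integral_one_div
        rw [huIcc]
        intro hx
        exact absurd hx.1 (not_le.mpr hm0)
      · have hderiv : ∀ u ∈ Set.uIcc m a,
            HasDerivAt (fun u : ℝ => Real.log (u ^ 2 + 1) / 2) (u / (u ^ 2 + 1)) u := by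
          intro u _
          have hd1 : HasDerivAt (fun u : ℝ => u ^ 2 + 1) (2 * u) u := by
            simpa using (hasDerivAt_pow 2 u).add_const 1
          have hd2 := (hd1.log (by positivity)).div_const 2
          refine hd2.congr_deriv ?_
          ring
        rw [intervalIntegral.integral_eq_sub_of_hasDerivAt hderiv hii2]
        ring
  have hnnint : 0 ≤ ∫ x in Set.Ioo 0 a, F x := setIntegral_nonneg measurableSet_Ioo hFnn
  rw [h1, h2, h3, ENNReal.toReal_ofReal hnnint, hval]
  -- final algebra
  have hcosh0 : (0:ℝ) < Real.cosh z := Real.cosh_pos z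
  have e1 : Real.log (a / m) = Real.log a + Real.log s := by
    rw [show a / m = a * s by rw [hmdef]; field_simp,
      Real.log_mul (ne_of_gt ha) (ne_of_gt hs0)]
  have e2 : Real.log (m ^ 2 + 1) = 2 * Real.log (Real.cosh z) - 2 * Real.log s := by
    have hm2 : m ^ 2 + 1 = (Real.cosh z / s) ^ 2 := by
      rw [hmdef, div_pow, div_pow, Real.cosh_sq]
      field_simp
      rw [hsdef]
      ring
    rw [hm2, div_pow, Real.log_div (pow_ne_zero 2 (ne_of_gt hcosh0))
      (pow_ne_zero 2 (ne_of_gt hs0)), Real.log_pow, Real.log_pow]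
    push_cast
    ring
  have e3 : Real.log (a ^ 2 + 1) = -(2 * Real.log (Real.cos (π / k))) := by
    have ht2 : a ^ 2 + 1 = (Real.cos (π / k) ^ 2)⁻¹ := by
      rw [hadef, ← Real.inv_one_add_tan_sq (ne_of_gt hcos), inv_inv]
      ring
    rw [ht2, Real.log_inv, Real.log_pow]
    push_cast
    ring
  have e4 : Real.log (Real.sin (π / k) * Real.cosh z)
      = Real.log (Real.sin (π / k)) + Real.log (Real.cosh z) :=
    Real.log_mul (ne_of_gt hsin) (ne_of_gt hcosh0)
  have e5 : Real.log (Real.sin (π / k)) = Real.log a + Real.log (Real.cos (π / k)) := by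
    rw [← Real.log_mul (ne_of_gt ha) (ne_of_gt hcos), hadef,
      Real.tan_mul_cos (ne_of_gt hcos)]
  rw [e1, e2, e3, e4, e5, hmdef]
  ring
end
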